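/- Let $A$ be a unital associative ring and let $k \ge 2$ be an integer. Then the two-sided ideal $T^{(k)}(A)$ generated by all left-normed commutators $[a_1, \dots, a_k]$ ($a_i \in A$) coincides with the right ideal of $A$ generated by these commutators; that is, every element of $T^{(k)}(A)$ is a finite sum of elements of the form $[a_1, \dots, a_k]\,u$ with $a_i, u \in A$. -/

import Mathlib

/-- The ring commutator `[a, b] = a * b - b * a`. -/
def brk {A : Type*} [NonUnitalNonAssocRing A] (a b : A) : A := a * b - b * a

/-- The left-normed commutator `[a 0, a 1, ..., a (k-1)]`. -/
def lnc {A : Type*} [NonUnitalNonAssocRing A] : ∀ {k : ℕ}, (Fin k → A) → A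
  | 0, _ => 0
  | 1, a => a 0
  | k + 2, a => brk (lnc (Fin.init a)) (a (Fin.last (k + 1)))

/-- `T A m` is the two-sided ideal of `A` generated by all left-normed commutators
of length `m` (for `m = 1` this is all of `A`). -/
def T (A : Type*) [NonUnitalNonAssocRing A] (m : ℕ) : TwoSidedIdeal A :=
  TwoSidedIdeal.span {x | ∃ a : Fin m → A, x = lnc a}

/-! With `c = [a₁, …, a_{k-1}]`, the identity `b [c, y] = [c, b y] - [c, b] y` gives
`b [a₁, …, a_k] u = [a₁, …, a_{k-1}, b a_k] u - [a₁, …, a_{k-1}, b] (a_k u)`.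
So the additive span of the products `[a₁, …, a_k] u` is closed under left multiplication too.
Being a two-sided ideal that contains `[a₁, …, a_k] = [a₁, …, a_k] 1` and lies in `T^{(k)}`,
it is `T^{(k)}`. -/

section

variable {A : Type*}

lemma lnc_snoc [NonUnitalNonAssocRing A] {m : ℕ} (a : Fin (m + 1) → A) (x : A) :
    lnc (Fin.snoc a x) = brk (lnc a) x := by
  simp only [lnc, Fin.init_snoc, Fin.snoc_last]

lemma mul_brk [NonUnitalRing A] (c b y : A) : b * brk c y = brk c (b * y) - brk c b * y := by
  simp only [brk, mul_sub, sub_mul, mul_assoc]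
  abel

def lncMulClosure (A : Type*) [NonUnitalRing A] (k : ℕ) : AddSubgroup A :=
  AddSubgroup.closure {z | ∃ (a : Fin k → A) (u : A), z = lnc a * u}

section NonUnitalRing

variable [NonUnitalRing A] {k m : ℕ}

lemma lnc_mul_mem_lncMulClosure (a : Fin k → A) (u : A) : lnc a * u ∈ lncMulClosure A k :=
  AddSubgroup.subset_closure ⟨a, u, rfl⟩

lemma map_mem_lncMulClosure (f : A →+ A)
    (hf : ∀ (a : Fin k → A) u, f (lnc a * u) ∈ lncMulClosure A k)
    {z : A} (hz : z ∈ lncMulClosure A k) : f z ∈ lncMulClosure A k :=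
  (AddSubgroup.closure_le ((lncMulClosure A k).comap f)).mpr
    (by rintro _ ⟨a, u, rfl⟩; exact hf a u) hz

lemma mul_mem_lncMulClosure_right {z : A} (hz : z ∈ lncMulClosure A k) (b : A) :
    z * b ∈ lncMulClosure A k :=
  map_mem_lncMulClosure (AddMonoidHom.mulRight b)
    (fun a u ↦ by simpa only [AddMonoidHom.mulRight_apply, mul_assoc] using
      lnc_mul_mem_lncMulClosure a (u * b)) hz

lemma mul_lnc_mul_mem_lncMulClosure (a : Fin (m + 2) → A) (b u : A) :
    b * (lnc a * u) ∈ lncMulClosure A (m + 2) := by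
  have hsplit : lnc a = brk (lnc (Fin.init a)) (a (Fin.last (m + 1))) := rfl
  have hexpand : b * (lnc a * u) = lnc (Fin.snoc (Fin.init a) (b * a (Fin.last (m + 1)))) * u
      - lnc (Fin.snoc (Fin.init a) b) * (a (Fin.last (m + 1)) * u) := by
    rw [lnc_snoc, lnc_snoc, ← mul_assoc, hsplit, mul_brk, sub_mul, mul_assoc]
  rw [hexpand]
  exact sub_mem (lnc_mul_mem_lncMulClosure _ _) (lnc_mul_mem_lncMulClosure _ _)

lemma mul_mem_lncMulClosure_left {z : A} (hz : z ∈ lncMulClosure A (m + 2)) (b : A) :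
    b * z ∈ lncMulClosure A (m + 2) :=
  map_mem_lncMulClosure (AddMonoidHom.mulLeft b) (mul_lnc_mul_mem_lncMulClosure · b) hz

def lncIdeal (A : Type*) [NonUnitalRing A] (m : ℕ) : TwoSidedIdeal A :=
  .mk' (lncMulClosure A (m + 2)) (zero_mem _) add_mem neg_mem
    (mul_mem_lncMulClosure_left · _) (mul_mem_lncMulClosure_right · _)

lemma mem_lncIdeal {x : A} : x ∈ lncIdeal A m ↔ x ∈ lncMulClosure A (m + 2) :=
  TwoSidedIdeal.mem_mk' ..

end NonUnitalRing

lemma T_eq_lncIdeal [Ring A] (m : ℕ) : T A (m + 2) = lncIdeal A m := by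
  refine le_antisymm (TwoSidedIdeal.span_le.mpr ?_) fun x hx ↦ ?_
  · rintro _ ⟨a, rfl⟩
    exact mem_lncIdeal.mpr (by simpa only [mul_one] using lnc_mul_mem_lncMulClosure a 1)
  · refine (AddSubgroup.closure_le (AddSubgroup.ofClass (T A (m + 2)))).mpr ?_ (mem_lncIdeal.mp hx)
    rintro _ ⟨a, u, rfl⟩
    exact TwoSidedIdeal.mul_mem_right _ _ _ (TwoSidedIdeal.subset_span ⟨a, rfl⟩)

end

theorem T_eq_rightIdeal {A : Type*} [Ring A] (k : ℕ) (hk : 2 ≤ k) (x : A) :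
    x ∈ T A k ↔
      x ∈ AddSubgroup.closure {z : A | ∃ (a : Fin k → A) (u : A), z = lnc a * u} := by
  obtain ⟨m, rfl⟩ : ∃ m, k = m + 2 := ⟨k - 2, by omega⟩
  rw [T_eq_lncIdeal, mem_lncIdeal, lncMulClosure]
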